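/- For all positive integers k and j, the misère outcome of the Partizan Kayles position consisting of k strips of length 1 and j strips of length 2 is: N if k = j, or if k < j and k + 2j ≡ 0 (mod 3); R if k > j, or if k < j and k + 2j ≡ 1 (mod 3); P if k < j and k + 2j ≡ 2 (mod 3). -/

import Mathlib

/-- Add a strip of length `k` to a position (strips of length 0 are discarded). -/
def addStrip (m : Multiset ℕ) (k : ℕ) : Multiset ℕ := if k = 0 then m else k ::ₘ m

/-- Left removes one square from a strip of length `n ≥ 1`, leaving strips `i` and `n-1-i`. -/
def LeftMove (G G' : Multiset ℕ) : Prop :=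
  ∃ n ∈ G, ∃ i, i + 1 ≤ n ∧ G' = addStrip (addStrip (G.erase n) i) (n - 1 - i)

/-- Right removes two adjacent squares from a strip of length `n ≥ 2`, leaving `i` and `n-2-i`. -/
def RightMove (G G' : Multiset ℕ) : Prop :=
  ∃ n ∈ G, ∃ i, i + 2 ≤ n ∧ G' = addStrip (addStrip (G.erase n) i) (n - 2 - i)

mutual
  /-- Misère play: Left, to move, wins (a player unable to move wins). -/
  inductive LeftWinsMover : Multiset ℕ → Prop
    | cannot (G : Multiset ℕ) : (¬ ∃ G', LeftMove G G') → LeftWinsMover G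
    | move (G G' : Multiset ℕ) : LeftMove G G' → LeftWinsWaiter G' → LeftWinsMover G
  /-- Misère play: Left wins with Right to move. -/
  inductive LeftWinsWaiter : Multiset ℕ → Prop
    | intro (G : Multiset ℕ) : (∃ G', RightMove G G') →
        (∀ G', RightMove G G' → LeftWinsMover G') → LeftWinsWaiter G
end

inductive Outcome | L | N | P | R
  deriving DecidableEq

open Classical in
/-- The misère outcome `o⁻(G)`. -/
noncomputable def outcome (G : Multiset ℕ) : Outcome :=
  if LeftWinsMover G then (if LeftWinsWaiter G then Outcome.L else Outcome.N)
  else (if LeftWinsWaiter G then Outcome.P else Outcome.R)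

/-- The partial order on outcomes: `L` greatest, `R` least, `N` and `P` incomparable. -/
def Outcome.le (a b : Outcome) : Prop := a = b ∨ a = Outcome.R ∨ b = Outcome.L

/-- `pos k j` is the position `kS₁ + jS₂`. -/
def pos (k j : ℕ) : Multiset ℕ := Multiset.replicate k 1 + Multiset.replicate j 2

/-! In `kS₁ + jS₂` Right's only move deletes a `2`, while Left either deletes a `1` or shrinks a `2`
to a `1`. So Left, moving second, wins exactly when a `2` is left for Right to delete and Left then
wins moving first in `kS₁ + (j-1)S₂`; and one Left move followed by Right's reply sends `(k, j)` to
`(k-1, j-1)` or to `(k+1, j-2)`. Hence Left, moving first, wins iff she can steer the play into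
`(0, 0)`, where she cannot move; the positions from which she can are those with `k = j` or with
`k < j` and `3 ∣ j - k`. The remaining conditions follow because `k + 2j ≡ k - j (mod 3)`. -/

theorem leftWinsMover_iff {G : Multiset ℕ} :
    LeftWinsMover G ↔ (¬ ∃ G', LeftMove G G') ∨ ∃ G', LeftMove G G' ∧ LeftWinsWaiter G' := by
  constructor
  · rintro (⟨_, hG⟩ | ⟨_, G', hG', hw⟩)
    · exact Or.inl hG
    · exact Or.inr ⟨G', hG', hw⟩
  · rintro (hG | ⟨G', hG', hw⟩)
    · exact .cannot G hG
    · exact .move G G' hG' hw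

theorem leftWinsWaiter_iff {G : Multiset ℕ} :
    LeftWinsWaiter G ↔ (∃ G', RightMove G G') ∧ ∀ G', RightMove G G' → LeftWinsMover G' := by
  constructor
  · rintro ⟨_, hG, hall⟩
    exact ⟨hG, hall⟩
  · rintro ⟨hG, hall⟩
    exact .intro G hG hall

theorem outcome_eq_N {G : Multiset ℕ} (hm : LeftWinsMover G) (hw : ¬ LeftWinsWaiter G) :
    outcome G = Outcome.N := by
  simp [outcome, hm, hw]

theorem outcome_eq_R {G : Multiset ℕ} (hm : ¬ LeftWinsMover G) (hw : ¬ LeftWinsWaiter G) :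
    outcome G = Outcome.R := by
  simp [outcome, hm, hw]

theorem outcome_eq_P {G : Multiset ℕ} (hm : ¬ LeftWinsMover G) (hw : LeftWinsWaiter G) :
    outcome G = Outcome.P := by
  simp [outcome, hm, hw]

theorem mem_pos {n k j : ℕ} : n ∈ pos k j ↔ (n = 1 ∧ 1 ≤ k) ∨ (n = 2 ∧ 1 ≤ j) := by
  simp only [pos, Multiset.mem_add, Multiset.mem_replicate]
  omega

theorem one_cons_pos (k j : ℕ) : 1 ::ₘ pos k j = pos (k + 1) j := by
  simp [pos, Multiset.replicate_succ, Multiset.cons_add]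

theorem two_cons_pos (k j : ℕ) : 2 ::ₘ pos k j = pos k (j + 1) := by
  simp [pos, Multiset.replicate_succ]

theorem erase_one_pos (k j : ℕ) : (pos (k + 1) j).erase 1 = pos k j := by
  rw [← one_cons_pos, Multiset.erase_cons_head]

theorem erase_two_pos (k j : ℕ) : (pos k (j + 1)).erase 2 = pos k j := by
  rw [← two_cons_pos, Multiset.erase_cons_head]

theorem leftMove_pos_iff {k j : ℕ} {G' : Multiset ℕ} :
    LeftMove (pos k j) G' ↔ (1 ≤ k ∧ G' = pos (k - 1) j) ∨ (1 ≤ j ∧ G' = pos (k + 1) (j - 1)) := by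
  constructor
  · rintro ⟨n, hn, i, hi, rfl⟩
    rcases mem_pos.1 hn with ⟨rfl, hk⟩ | ⟨rfl, hj⟩
    · obtain ⟨k, rfl⟩ := Nat.exists_eq_add_of_le' hk
      obtain rfl : i = 0 := by omega
      simp [erase_one_pos, addStrip]
    · obtain ⟨j, rfl⟩ := Nat.exists_eq_add_of_le' hj
      obtain rfl | rfl : i = 0 ∨ i = 1 := by omega
      all_goals simp [erase_two_pos, addStrip, one_cons_pos]
  · rintro (⟨hk, rfl⟩ | ⟨hj, rfl⟩)
    · obtain ⟨k, rfl⟩ := Nat.exists_eq_add_of_le' hk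
      exact ⟨1, mem_pos.2 (by omega), 0, le_rfl, by simp [erase_one_pos, addStrip]⟩
    · obtain ⟨j, rfl⟩ := Nat.exists_eq_add_of_le' hj
      exact ⟨2, mem_pos.2 (by omega), 0, by omega, by simp [erase_two_pos, addStrip, one_cons_pos]⟩

theorem rightMove_pos_iff {k j : ℕ} {G' : Multiset ℕ} :
    RightMove (pos k j) G' ↔ 1 ≤ j ∧ G' = pos k (j - 1) := by
  constructor
  · rintro ⟨n, hn, i, hi, rfl⟩
    rcases mem_pos.1 hn with ⟨rfl, -⟩ | ⟨rfl, hj⟩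
    · omega
    · obtain ⟨j, rfl⟩ := Nat.exists_eq_add_of_le' hj
      obtain rfl : i = 0 := by omega
      simp [erase_two_pos, addStrip]
  · rintro ⟨hj, rfl⟩
    obtain ⟨j, rfl⟩ := Nat.exists_eq_add_of_le' hj
    exact ⟨2, mem_pos.2 (by omega), 0, le_rfl, by simp [erase_two_pos, addStrip]⟩

theorem leftWinsWaiter_pos_iff {k j : ℕ} :
    LeftWinsWaiter (pos k j) ↔ 1 ≤ j ∧ LeftWinsMover (pos k (j - 1)) := by
  simp only [leftWinsWaiter_iff, rightMove_pos_iff]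
  constructor
  · rintro ⟨⟨_, hj, -⟩, hall⟩
    exact ⟨hj, hall _ ⟨hj, rfl⟩⟩
  · rintro ⟨hj, hm⟩
    exact ⟨⟨_, hj, rfl⟩, fun _ ⟨_, hG'⟩ => hG' ▸ hm⟩

theorem leftWinsMover_pos_iff_step {k j : ℕ} :
    LeftWinsMover (pos k j) ↔ (k = 0 ∧ j = 0) ∨
      (1 ≤ k ∧ 1 ≤ j ∧ LeftWinsMover (pos (k - 1) (j - 1))) ∨
      (2 ≤ j ∧ LeftWinsMover (pos (k + 1) (j - 2))) := by
  rw [leftWinsMover_iff]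
  simp only [leftMove_pos_iff, or_and_right, exists_or, and_assoc,
    exists_and_left, exists_eq_left, exists_eq, and_true]
  simp only [leftWinsWaiter_pos_iff]
  grind

theorem leftWinsMover_pos_iff {k j : ℕ} :
    LeftWinsMover (pos k j) ↔ k = j ∨ (k < j ∧ (j - k) % 3 = 0) := by
  induction j using Nat.strong_induction_on generalizing k with
  | _ j ih =>
    rw [leftWinsMover_pos_iff_step]
    rcases Nat.lt_or_ge j 2 with hj | hj
    · interval_cases j
      · simp
      · rw [ih (1 - 1) (by omega)]
        omega
    · rw [ih (j - 1) (by omega), ih (j - 2) (by omega)]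
      omega

theorem kayles_outcome_ones_twos (k j : ℕ) (hk : 1 ≤ k) (hj : 1 ≤ j) :
    ((k = j ∨ (k < j ∧ (k + 2 * j) % 3 = 0)) → outcome (pos k j) = Outcome.N) ∧
    ((k > j ∨ (k < j ∧ (k + 2 * j) % 3 = 1)) → outcome (pos k j) = Outcome.R) ∧
    ((k < j ∧ (k + 2 * j) % 3 = 2) → outcome (pos k j) = Outcome.P) := by
  have hm := leftWinsMover_pos_iff (k := k) (j := j)
  have hw : LeftWinsWaiter (pos k j) ↔ k < j ∧ (j - k) % 3 = 1 := by
    rw [leftWinsWaiter_pos_iff, leftWinsMover_pos_iff]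
    omega
  refine ⟨fun h => outcome_eq_N ?_ ?_, fun h => outcome_eq_R ?_ ?_, fun h => outcome_eq_P ?_ ?_⟩ <;>
    simp only [hm, hw] <;> omega
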